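/- Let H be a Hopf π-coalgebra with a left cosection η = {η_α : H_1 → H_α} (a family of algebra maps with Δ^H_{1,α} η_α = (I_1 ⊗ η_α)Δ^H_{1,1}), (C, σ) a Hopf π-subcoalgebra with left section g, and V a right π-comodule over C with coactions ρ. Then for each α ∈ π, the map q_α : V_1 ⊗ B_α → Ind(ρ)_α defined by q_α(v ⊗ b) = v₁ ⊗ η_α(g_1(v₂))·b (where ρ_{1,1}(v) = v₁ ⊗ v₂) is an isomorphism of right B_α-modules, with inverse q_α⁻¹(v ⊗ h) = v ⊗ η_α(g_1⁻¹(σ_1(h₁)))·h₂. Hence Ind(ρ) ≅ V ⊗ B as right B-modules. -/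
import Mathlib


open TensorProduct LinearMap

/-- The data and axioms of a `π`-coalgebra over `K`: a family of `K`-vector spaces
`C α` indexed by a group `π`, with comultiplications
`Δ_{α,β} : C_{αβ} → C α ⊗ C β` and a counit `ε : C 1 → K`, satisfying
coassociativity and counitality.  (To avoid dependent-type issues, the
comultiplication takes an index `γ` together with a proof `α * β = γ`.) -/
structure PiCoalg (K : Type*) [Field K] (π : Type*) [Group π]
    (C : π → Type*) [∀ α, AddCommGroup (C α)] [∀ α, Module K (C α)] where
  comul : ∀ (α β : π) {γ : π}, α * β = γ → (C γ →ₗ[K] C α ⊗[K] C β)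
  counit : C 1 →ₗ[K] K
  coassoc : ∀ (α β γ δ : π) (h : α * β * γ = δ) (h' : α * (β * γ) = δ),
    (TensorProduct.assoc K (C α) (C β) (C γ)).toLinearMap ∘ₗ
        (TensorProduct.map (comul α β rfl) LinearMap.id) ∘ₗ comul (α * β) γ h
      = (TensorProduct.map LinearMap.id (comul β γ rfl)) ∘ₗ comul α (β * γ) h'
  counit_comul : ∀ (α : π),
    (TensorProduct.lid K (C α)).toLinearMap ∘ₗ
        (TensorProduct.map counit LinearMap.id) ∘ₗ comul 1 α (one_mul α)
      = LinearMap.id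
  comul_counit : ∀ (α : π),
    (TensorProduct.rid K (C α)).toLinearMap ∘ₗ
        (TensorProduct.map LinearMap.id counit) ∘ₗ comul α 1 (mul_one α)
      = LinearMap.id

/-- A Hopf `π`-coalgebra: a `π`-coalgebra whose components are `K`-algebras,
whose comultiplications and counit are algebra maps, together with an antipode
family `S_α : H α → H α⁻¹` satisfying the antipode axioms. -/
structure HopfPiCoalg (K : Type*) [Field K] (π : Type*) [Group π]
    (H : π → Type*) [∀ α, Ring (H α)] [∀ α, Algebra K (H α)]
    extends PiCoalg K π H where
  comul_mul : ∀ (α β γ : π) (h : α * β = γ) (x y : H γ),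
    comul α β h (x * y) = comul α β h x * comul α β h y
  comul_one : ∀ (α β γ : π) (h : α * β = γ), comul α β h (1 : H γ) = 1
  counit_mul : ∀ (x y : H 1), counit (x * y) = counit x * counit y
  counit_one : counit (1 : H 1) = 1
  antipode : ∀ (α β : π), α⁻¹ = β → (H α →ₗ[K] H β)
  antipode_left : ∀ (α : π),
    (LinearMap.mul' K (H α)) ∘ₗ
        (TensorProduct.map (antipode α⁻¹ α (inv_inv α)) LinearMap.id) ∘ₗ
          comul α⁻¹ α (inv_mul_cancel α)
      = (Algebra.linearMap K (H α)) ∘ₗ counit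
  antipode_right : ∀ (α : π),
    (LinearMap.mul' K (H α)) ∘ₗ
        (TensorProduct.map LinearMap.id (antipode α⁻¹ α (inv_inv α))) ∘ₗ
          comul α α⁻¹ (mul_inv_cancel α)
      = (Algebra.linearMap K (H α)) ∘ₗ counit

/-- A Hopf `π`-subcoalgebra `(C, σ)` of a Hopf `π`-coalgebra `H`: a Hopf
`π`-coalgebra `C` together with a family of surjective algebra epimorphisms
`σ_α : H α → C α` commuting with comultiplication, counit and antipode. -/
structure HopfPiSub (K : Type*) [Field K] (π : Type*) [Group π]
    (H : π → Type*) [∀ α, Ring (H α)] [∀ α, Algebra K (H α)]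
    (C : π → Type*) [∀ α, Ring (C α)] [∀ α, Algebra K (C α)]
    (hH : HopfPiCoalg K π H) (hC : HopfPiCoalg K π C) where
  σ : ∀ α, H α →ₗ[K] C α
  σ_surj : ∀ α, Function.Surjective (σ α)
  σ_mul : ∀ (α : π) (x y : H α), σ α (x * y) = σ α x * σ α y
  σ_one : ∀ (α : π), σ α (1 : H α) = 1
  σ_comul : ∀ (α β γ : π) (h : α * β = γ),
    (hC.comul α β h) ∘ₗ σ γ = (TensorProduct.map (σ α) (σ β)) ∘ₗ hH.comul α β h
  σ_counit : hC.counit ∘ₗ σ 1 = hH.counit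
  σ_antipode : ∀ (α β : π) (h : α⁻¹ = β),
    (hC.antipode α β h) ∘ₗ σ α = (σ β) ∘ₗ hH.antipode α β h

/-- A left `π`-coisotropic quantum subgroup `(C, σ)` of a Hopf `π`-coalgebra `H`:
a `π`-coalgebra `C` whose components are left `H α`-modules (the action being
recorded as a linear map `ω_α : H α ⊗ C α → C α`), together with surjective
left-module maps `σ_α : H α → C α` intertwining comultiplication and counit. -/
structure Coisotropic (K : Type*) [Field K] (π : Type*) [Group π]
    (H : π → Type*) [∀ α, Ring (H α)] [∀ α, Algebra K (H α)]
    (C : π → Type*) [∀ α, AddCommGroup (C α)] [∀ α, Module K (C α)]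
    (hH : HopfPiCoalg K π H) (hC : PiCoalg K π C) where
  ω : ∀ α, H α ⊗[K] C α →ₗ[K] C α
  ω_assoc : ∀ (α : π) (h k : H α) (c : C α),
    ω α ((h * k) ⊗ₜ[K] c) = ω α (h ⊗ₜ[K] ω α (k ⊗ₜ[K] c))
  ω_one : ∀ (α : π) (c : C α), ω α ((1 : H α) ⊗ₜ[K] c) = c
  σ : ∀ α, H α →ₗ[K] C α
  σ_surj : ∀ α, Function.Surjective (σ α)
  σ_mod : ∀ (α : π) (h k : H α), σ α (h * k) = ω α (h ⊗ₜ[K] σ α k)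
  σ_comul : ∀ (α β γ : π) (h : α * β = γ),
    (hC.comul α β h) ∘ₗ σ γ = (TensorProduct.map (σ α) (σ β)) ∘ₗ hH.comul α β h
  σ_counit : hC.counit ∘ₗ σ 1 = hH.counit

/-- A right `π`-comodule `M` over a `π`-coalgebra `C`, with coactions
`θ_{α,β} : M_{αβ} → M α ⊗ C β` satisfying coassociativity and counitality. -/
structure PiComodule (K : Type*) [Field K] (π : Type*) [Group π]
    (C : π → Type*) [∀ α, AddCommGroup (C α)] [∀ α, Module K (C α)]
    (M : π → Type*) [∀ α, AddCommGroup (M α)] [∀ α, Module K (M α)]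
    (hC : PiCoalg K π C) where
  coact : ∀ (α β : π) {γ : π}, α * β = γ → (M γ →ₗ[K] M α ⊗[K] C β)
  coassoc : ∀ (α β γ δ : π) (h : α * β * γ = δ) (h' : α * (β * γ) = δ),
    (TensorProduct.assoc K (M α) (C β) (C γ)).toLinearMap ∘ₗ
        (TensorProduct.map (coact α β rfl) LinearMap.id) ∘ₗ coact (α * β) γ h
      = (TensorProduct.map LinearMap.id (hC.comul β γ rfl)) ∘ₗ coact α (β * γ) h'
  coact_counit : ∀ (α : π),
    (TensorProduct.rid K (M α)).toLinearMap ∘ₗ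
        (TensorProduct.map LinearMap.id hC.counit) ∘ₗ coact α 1 (mul_one α)
      = LinearMap.id

/-- A left section `g` of a Hopf `π`-subcoalgebra `(C, σ)`: a family of linear
maps `g_α : C α → H α` with convolution inverse `g⁻¹ = {g_α⁻¹ : C_{α⁻¹} → H α}`,
such that `g_α(1) = 1` and `L_{1,α} ∘ g_α = (I ⊗ g_α) ∘ Δ^C_{1,α}`. -/
structure PiSection (K : Type*) [Field K] (π : Type*) [Group π]
    (H : π → Type*) [∀ α, Ring (H α)] [∀ α, Algebra K (H α)]
    (C : π → Type*) [∀ α, Ring (C α)] [∀ α, Algebra K (C α)]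
    (hH : HopfPiCoalg K π H) (hC : HopfPiCoalg K π C)
    (S : HopfPiSub K π H C hH hC) where
  g : ∀ α, C α →ₗ[K] H α
  ginv : ∀ (α β : π), β = α⁻¹ → (C β →ₗ[K] H α)
  g_one : ∀ α, g α (1 : C α) = 1
  g_sec : ∀ α,
    ((TensorProduct.map (S.σ 1) LinearMap.id) ∘ₗ hH.comul 1 α (one_mul α)) ∘ₗ g α
      = (TensorProduct.map LinearMap.id (g α)) ∘ₗ hC.comul 1 α (one_mul α)
  conv_right : ∀ α,
    (LinearMap.mul' K (H α)) ∘ₗ (TensorProduct.map (g α) (ginv α α⁻¹ rfl)) ∘ₗ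
        hC.comul α α⁻¹ (mul_inv_cancel α)
      = (Algebra.linearMap K (H α)) ∘ₗ hC.counit
  conv_left : ∀ α,
    (LinearMap.mul' K (H α)) ∘ₗ (TensorProduct.map (ginv α α⁻¹ rfl) (g α)) ∘ₗ
        hC.comul α⁻¹ α (inv_mul_cancel α)
      = (Algebra.linearMap K (H α)) ∘ₗ hC.counit

/-- The subspace `B = {h : L(h) = u ⊗ h}` (for `u = 1` this is the `π`-quantum
right embeddable homogeneous space). -/
noncomputable def Bsub (K : Type*) [Field K] {C1 Hα : Type*}
    [AddCommGroup C1] [Module K C1] [AddCommGroup Hα] [Module K Hα]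
    (L1 : Hα →ₗ[K] C1 ⊗[K] Hα) (u : C1) : Submodule K Hα :=
  LinearMap.ker (L1 - (TensorProduct.mk K C1 Hα) u)

/-- The induced representation space
`Ind(ρ)_α = { x ∈ V₁ ⊗ H_α : (I ⊗ L_{1,α}) x = (ρ_{1,1} ⊗ I) x }`
(the right-hand side being reassociated canonically). -/
noncomputable def IndSub (K : Type*) [Field K] {V1 C1 Hα : Type*}
    [AddCommGroup V1] [Module K V1] [AddCommGroup C1] [Module K C1]
    [AddCommGroup Hα] [Module K Hα]
    (L1 : Hα →ₗ[K] C1 ⊗[K] Hα) (ρ11 : V1 →ₗ[K] V1 ⊗[K] C1) :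
    Submodule K (V1 ⊗[K] Hα) :=
  LinearMap.ker ((TensorProduct.map LinearMap.id L1) -
    (TensorProduct.assoc K V1 C1 Hα).toLinearMap ∘ₗ
      (TensorProduct.map ρ11 LinearMap.id))


section AuxCast
variable (K : Type*) [Field K] {π : Type*} [Group π]

section Plain
variable {C : π → Type*} [∀ a, AddCommGroup (C a)] [∀ a, Module K (C a)]

/-- Transport along an equality of indices, as a linear map. -/
def lcast {γ γ' : π} (e : γ = γ') : C γ →ₗ[K] C γ' where
  toFun x := e ▸ x
  map_add' x y := by cases e; rfl
  map_smul' c x := by cases e; rfl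

lemma lcast_cancel {γ γ' : π} (e : γ = γ') (x : C γ') :
    lcast K e (lcast K e.symm x) = x := by cases e; rfl

lemma comul_cast_dom (hc : PiCoalg K π C) {α β γ γ' : π} (e : γ = γ')
    (h : α * β = γ) (h' : α * β = γ') (x : C γ) :
    hc.comul α β h' (lcast K e x) = hc.comul α β h x := by cases e; rfl

lemma comul_cast_left (hc : PiCoalg K π C) {α α' β γ : π} (e : α = α')
    (h : α * β = γ) (h' : α' * β = γ) (x : C γ) :
    hc.comul α' β h' x
      = TensorProduct.map (lcast K e) LinearMap.id (hc.comul α β h x) := by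
  cases e
  rw [show (lcast K (rfl : α = α) : C α →ₗ[K] C α) = LinearMap.id from rfl,
    TensorProduct.map_id]
  rfl

lemma comul_cast_right (hc : PiCoalg K π C) {α β β' γ : π} (e : β = β')
    (h : α * β = γ) (h' : α * β' = γ) (x : C γ) :
    hc.comul α β' h' x
      = TensorProduct.map LinearMap.id (lcast K e) (hc.comul α β h x) := by
  cases e
  rw [show (lcast K (rfl : β = β) : C β →ₗ[K] C β) = LinearMap.id from rfl,
    TensorProduct.map_id]
  rfl
end Plain

section Com
variable {C : π → Type*} [∀ a, AddCommGroup (C a)] [∀ a, Module K (C a)]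
  {M : π → Type*} [∀ a, AddCommGroup (M a)] [∀ a, Module K (M a)]
  {hc : PiCoalg K π C}

lemma coact_cast_dom (m : PiComodule K π C M hc) {α β γ γ' : π} (e : γ = γ')
    (h : α * β = γ) (h' : α * β = γ') (x : M γ) :
    m.coact α β h' (lcast K e x) = m.coact α β h x := by cases e; rfl

lemma coact_cast_left (m : PiComodule K π C M hc) {α α' β γ : π} (e : α = α')
    (h : α * β = γ) (h' : α' * β = γ) (x : M γ) :
    m.coact α' β h' x
      = TensorProduct.map (lcast K e) LinearMap.id (m.coact α β h x) := by
  cases e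
  rw [show (lcast K (rfl : α = α) : M α →ₗ[K] M α) = LinearMap.id from rfl,
    TensorProduct.map_id]
  rfl

lemma coact_cast_right (m : PiComodule K π C M hc) {α β β' γ : π} (e : β = β')
    (h : α * β = γ) (h' : α * β' = γ) (x : M γ) :
    m.coact α β' h' x
      = TensorProduct.map LinearMap.id (lcast K e) (m.coact α β h x) := by
  cases e
  rw [show (lcast K (rfl : β = β) : C β →ₗ[K] C β) = LinearMap.id from rfl,
    TensorProduct.map_id]
  rfl
end Com

section Hopf
variable {C : π → Type*} [∀ a, Ring (C a)] [∀ a, Algebra K (C a)]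

lemma antipode_cast (hc : HopfPiCoalg K π C) {α α' β : π} (e : α = α')
    (h : α⁻¹ = β) (h' : α'⁻¹ = β) (x : C α) :
    hc.antipode α β h x = hc.antipode α' β h' (lcast K e x) := by cases e; rfl
end Hopf

section GinvCast
variable {H : π → Type*} [∀ a, Ring (H a)] [∀ a, Algebra K (H a)]
  {C : π → Type*} [∀ a, Ring (C a)] [∀ a, Algebra K (C a)]
  {hH : HopfPiCoalg K π H} {hC : HopfPiCoalg K π C}
  {S : HopfPiSub K π H C hH hC}

lemma ginv_cast (G : PiSection K π H C hH hC S) {α β β' : π} (e : β = β')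
    (h : β = α⁻¹) (h' : β' = α⁻¹) (x : C β') :
    G.ginv α β' h' x = G.ginv α β h (lcast K e.symm x) := by cases e; rfl
end GinvCast
end AuxCast

section AuxConv
variable {K : Type*} [Field K] {X Y A : Type*}
  [AddCommGroup X] [Module K X] [AddCommGroup Y] [Module K Y]
  [Ring A] [Algebra K A]

/-- Mixed convolution product of `f : X → A` and `k : Y → A` along a
"coaction" `ΔY : Y → X ⊗ Y`. -/
noncomputable def convm (ΔY : Y →ₗ[K] X ⊗[K] Y) (f : X →ₗ[K] A) (k : Y →ₗ[K] A) :
    Y →ₗ[K] A :=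
  mul' K A ∘ₗ map f k ∘ₗ ΔY

lemma convm_apply (ΔY : Y →ₗ[K] X ⊗[K] Y) (f : X →ₗ[K] A) (k : Y →ₗ[K] A) (y : Y) :
    convm ΔY f k y = mul' K A (map f k (ΔY y)) := rfl

lemma convm_assoc (ΔX : X →ₗ[K] X ⊗[K] X) (ΔY : Y →ₗ[K] X ⊗[K] Y)
    (hco : (map LinearMap.id ΔY) ∘ₗ ΔY
      = (TensorProduct.assoc K X X Y).toLinearMap ∘ₗ (map ΔX LinearMap.id) ∘ₗ ΔY)
    (f₁ f₂ : X →ₗ[K] A) (k : Y →ₗ[K] A) :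
    convm ΔY (convm ΔX f₁ f₂) k = convm ΔY f₁ (convm ΔY f₂ k) := by
  have key : (mul' K A ∘ₗ map (mul' K A ∘ₗ map f₁ f₂) k)
      = (mul' K A ∘ₗ map f₁ (mul' K A ∘ₗ map f₂ k)) ∘ₗ
          (TensorProduct.assoc K X X Y).toLinearMap := by
    apply TensorProduct.ext_threefold
    intro x y z
    simp [mul_assoc]
  unfold convm
  rw [show map (mul' K A ∘ₗ map f₁ f₂ ∘ₗ ΔX) k
      = (map (mul' K A ∘ₗ map f₁ f₂) k) ∘ₗ (map ΔX LinearMap.id) by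
    rw [← TensorProduct.map_comp]; rfl]
  rw [show map f₁ (mul' K A ∘ₗ map f₂ k ∘ₗ ΔY)
      = (map f₁ (mul' K A ∘ₗ map f₂ k)) ∘ₗ (map LinearMap.id ΔY) by
    rw [← TensorProduct.map_comp]; rfl]
  ext y
  have h1 := congrArg (fun (F : Y →ₗ[K] X ⊗[K] (X ⊗[K] Y)) => F y) hco
  simp only [comp_apply] at h1 ⊢
  rw [h1]
  have h2 := congrArg
    (fun (F : (X ⊗[K] X) ⊗[K] Y →ₗ[K] A) => F ((map ΔX LinearMap.id) (ΔY y))) key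
  simpa using h2

lemma convm_one (ΔY : Y →ₗ[K] X ⊗[K] Y) (ε : X →ₗ[K] K)
    (hcu : (TensorProduct.lid K Y).toLinearMap ∘ₗ (map ε LinearMap.id) ∘ₗ ΔY
      = LinearMap.id)
    (k : Y →ₗ[K] A) :
    convm ΔY (Algebra.linearMap K A ∘ₗ ε) k = k := by
  have key : mul' K A ∘ₗ map (Algebra.linearMap K A ∘ₗ ε) k
      = k ∘ₗ (TensorProduct.lid K Y).toLinearMap ∘ₗ (map ε LinearMap.id) := by
    apply TensorProduct.ext'
    intro x y
    simp [Algebra.smul_def]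
  ext y
  unfold convm
  simp only [comp_apply]
  have hk := congrArg (fun (F : X ⊗[K] Y →ₗ[K] A) => F (ΔY y)) key
  simp only [comp_apply] at hk
  rw [hk]
  have := congrArg (fun (F : Y →ₗ[K] Y) => k (F y)) hcu
  simpa using this

lemma convm_one_right (ΔX : X →ₗ[K] X ⊗[K] X) (ε : X →ₗ[K] K)
    (hcu : (TensorProduct.rid K X).toLinearMap ∘ₗ (map LinearMap.id ε) ∘ₗ ΔX
      = LinearMap.id)
    (f : X →ₗ[K] A) :
    convm ΔX f (Algebra.linearMap K A ∘ₗ ε) = f := by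
  have key : mul' K A ∘ₗ map f (Algebra.linearMap K A ∘ₗ ε)
      = f ∘ₗ (TensorProduct.rid K X).toLinearMap ∘ₗ (map LinearMap.id ε) := by
    apply TensorProduct.ext'
    intro x y
    simp [Algebra.smul_def, ← Algebra.commutes (ε y) (f x)]
  ext y
  unfold convm
  simp only [comp_apply]
  have hk := congrArg (fun (F : X ⊗[K] X →ₗ[K] A) => F (ΔX y)) key
  simp only [comp_apply] at hk
  rw [hk]
  have := congrArg (fun (F : X →ₗ[K] X) => f (F y)) hcu
  simpa using this
end AuxConv

section AuxMisc
variable {K : Type*} [Field K]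

lemma aux_map_map {M N M' N' M'' N'' : Type*}
    [AddCommGroup M] [Module K M] [AddCommGroup N] [Module K N]
    [AddCommGroup M'] [Module K M'] [AddCommGroup N'] [Module K N']
    [AddCommGroup M''] [Module K M''] [AddCommGroup N''] [Module K N'']
    (f₂ : M' →ₗ[K] M'') (g₂ : N' →ₗ[K] N'') (f₁ : M →ₗ[K] M') (g₁ : N →ₗ[K] N')
    (s : M ⊗[K] N) :
    map f₂ g₂ (map f₁ g₁ s) = map (f₂ ∘ₗ f₁) (g₂ ∘ₗ g₁) s := by
  rw [TensorProduct.map_comp]; rfl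

lemma aux_map_mul {A B A' B' : Type*}
    [Ring A] [Algebra K A] [Ring B] [Algebra K B]
    [Ring A'] [Algebra K A'] [Ring B'] [Algebra K B']
    (f : A →ₗ[K] A') (g : B →ₗ[K] B')
    (hf : ∀ x y, f (x * y) = f x * f y) (hg : ∀ x y, g (x * y) = g x * g y)
    (s t : A ⊗[K] B) :
    map f g (s * t) = map f g s * map f g t := by
  induction s using TensorProduct.induction_on with
  | zero => simp
  | tmul a b =>
    induction t using TensorProduct.induction_on with
    | zero => simp
    | tmul a' b' => simp [Algebra.TensorProduct.tmul_mul_tmul, hf, hg]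
    | add u v hu hv => simp only [mul_add, map_add, hu, hv]
  | add u v hu hv => simp only [add_mul, map_add, hu, hv]

lemma aux_hom_mul' {A A' : Type*} [Ring A] [Algebra K A] [Ring A'] [Algebra K A']
    (f : A →ₗ[K] A') (hf : ∀ x y, f (x * y) = f x * f y) (s : A ⊗[K] A) :
    f (mul' K A s) = mul' K A' (map f f s) := by
  induction s using TensorProduct.induction_on with
  | zero => simp
  | tmul a b => simp [hf]
  | add u v hu hv => simp only [map_add, hu, hv]

lemma aux_mul_one_tmul {A B : Type*} [Ring A] [Algebra K A] [Ring B] [Algebra K B]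
    (b : B) (s : A ⊗[K] B) :
    s * ((1 : A) ⊗ₜ[K] b) = map LinearMap.id (mulRight K b) s := by
  induction s using TensorProduct.induction_on with
  | zero => simp
  | tmul a b' => simp [Algebra.TensorProduct.tmul_mul_tmul]
  | add u v hu hv => simp only [add_mul, map_add, hu, hv]

lemma aux_mul'_map_right {X X' A : Type*}
    [AddCommGroup X] [Module K X] [AddCommGroup X'] [Module K X']
    [Ring A] [Algebra K A]
    (f : X →ₗ[K] A) (g : X' →ₗ[K] A) (b : A) (s : X ⊗[K] X') :
    mul' K A (map f (mulRight K b ∘ₗ g) s) = mul' K A (map f g s) * b := by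
  induction s using TensorProduct.induction_on with
  | zero => simp
  | tmul x y => simp [mul_assoc]
  | add u v hu hv => simp only [map_add, add_mul, hu, hv]

lemma aux_assoc_nat {M N P P' : Type*}
    [AddCommGroup M] [Module K M] [AddCommGroup N] [Module K N]
    [AddCommGroup P] [Module K P] [AddCommGroup P'] [Module K P']
    (f : P →ₗ[K] P') (t : (M ⊗[K] N) ⊗[K] P) :
    map LinearMap.id (map LinearMap.id f) ((TensorProduct.assoc K M N P) t)
      = (TensorProduct.assoc K M N P') (map LinearMap.id f t) := by
  have : (map LinearMap.id (map LinearMap.id f)) ∘ₗ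
        (TensorProduct.assoc K M N P).toLinearMap
      = (TensorProduct.assoc K M N P').toLinearMap ∘ₗ
        map (LinearMap.id : M ⊗[K] N →ₗ[K] M ⊗[K] N) f := by
    apply TensorProduct.ext_threefold
    intro x y z
    simp
  exact congrArg (fun (F : (M ⊗[K] N) ⊗[K] P →ₗ[K] M ⊗[K] (N ⊗[K] P')) => F t) this

lemma aux_map_smulRight {M N B : Type*}
    [AddCommGroup M] [Module K M] [AddCommGroup N] [Module K N]
    [AddCommGroup B] [Module K B]
    (ε : N →ₗ[K] K) (b : B) (s : M ⊗[K] N) :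
    map LinearMap.id (LinearMap.smulRight ε b) s
      = (TensorProduct.rid K M) (map LinearMap.id ε s) ⊗ₜ[K] b := by
  induction s using TensorProduct.induction_on with
  | zero => simp
  | tmul m n =>
    simp only [map_tmul, id_coe, _root_.id, smulRight_apply, rid_tmul]
    rw [tmul_smul, smul_tmul']
  | add u v hu hv => simp only [map_add, hu, hv, add_tmul]
end AuxMisc

set_option maxHeartbeats 2000000 in
/-- If `H` has a left cosection `η`, `(C, σ)` is a Hopf
`π`-subcoalgebra with left section `g`, and `V` is a right `π`-comodule over
`C`, then `q_α : V_1 ⊗ B_α → Ind(ρ)_α`, `v ⊗ b ↦ v₁ ⊗ η_α(g_1(v₂))·b`, is an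
isomorphism of right `B_α`-modules, with inverse
`q_α⁻¹(v ⊗ h) = v ⊗ η_α(g_1⁻¹(σ_1(h₁)))·h₂`.  Hence `Ind(ρ) ≅ V ⊗ B` as right
`B`-modules.  (Both `q_α` and `q_α⁻¹` are expressed below as the ambient maps
`Q, R : V_1 ⊗ H_α → V_1 ⊗ H_α`, `V_1 ⊗ B_α` being identified with the range of
`I ⊗ incl`.) -/
theorem ind_iso_V_tensor_B
    (K : Type*) [Field K] (π : Type*) [Group π]
    (H : π → Type*) [∀ α, Ring (H α)] [∀ α, Algebra K (H α)]
    (C : π → Type*) [∀ α, Ring (C α)] [∀ α, Algebra K (C α)]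
    (V : π → Type*) [∀ α, AddCommGroup (V α)] [∀ α, Module K (V α)]
    (hH : HopfPiCoalg K π H) (hC : HopfPiCoalg K π C)
    (S : HopfPiSub K π H C hH hC)
    (G : PiSection K π H C hH hC S)
    (ρ : PiComodule K π C V hC.toPiCoalg)
    -- a left cosection of `H`:
    (η : ∀ α, H 1 →ₗ[K] H α)
    (η_mul : ∀ (α : π) (x y : H 1), η α (x * y) = η α x * η α y)
    (η_one : ∀ (α : π), η α (1 : H 1) = 1)
    (η_cosec : ∀ (α : π),
      hH.comul 1 α (one_mul α) ∘ₗ η α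
        = (TensorProduct.map LinearMap.id (η α)) ∘ₗ hH.comul 1 1 (mul_one 1)) :
    ∀ (α : π) (Q R : V 1 ⊗[K] H α →ₗ[K] V 1 ⊗[K] H α),
      -- `Q` is the ambient form of `q_α : v ⊗ h ↦ v₁ ⊗ η_α(g_1(v₂))·h`:
      Q = (TensorProduct.map LinearMap.id
              ((LinearMap.mul' K (H α)) ∘ₗ
                (TensorProduct.map ((η α) ∘ₗ G.g 1) LinearMap.id))) ∘ₗ
            (TensorProduct.assoc K (V 1) (C 1) (H α)).toLinearMap ∘ₗ
            (TensorProduct.map (ρ.coact 1 1 (mul_one 1)) LinearMap.id) →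
      -- `R` is the ambient form of `q_α⁻¹ : v ⊗ h ↦ v ⊗ η_α(g_1⁻¹(σ_1(h₁)))·h₂`:
      R = TensorProduct.map LinearMap.id
            ((LinearMap.mul' K (H α)) ∘ₗ
              (TensorProduct.map ((η α) ∘ₗ G.ginv 1 1 inv_one.symm) LinearMap.id) ∘ₗ
              (TensorProduct.map (S.σ 1) LinearMap.id) ∘ₗ
              hH.comul 1 α (one_mul α)) →
      -- `Q` maps `V_1 ⊗ B_α` into `Ind(ρ)_α`:
      ((∀ x ∈ LinearMap.range (TensorProduct.map (LinearMap.id : V 1 →ₗ[K] V 1)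
            (Bsub K ((TensorProduct.map (S.σ 1) LinearMap.id) ∘ₗ
              hH.comul 1 α (one_mul α)) (1 : C 1)).subtype),
          Q x ∈ IndSub K ((TensorProduct.map (S.σ 1) LinearMap.id) ∘ₗ
            hH.comul 1 α (one_mul α)) (ρ.coact 1 1 (mul_one 1))) ∧
        -- `R` maps `Ind(ρ)_α` into `V_1 ⊗ B_α`:
        (∀ y ∈ IndSub K ((TensorProduct.map (S.σ 1) LinearMap.id) ∘ₗ
              hH.comul 1 α (one_mul α)) (ρ.coact 1 1 (mul_one 1)),
          R y ∈ LinearMap.range (TensorProduct.map (LinearMap.id : V 1 →ₗ[K] V 1)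
            (Bsub K ((TensorProduct.map (S.σ 1) LinearMap.id) ∘ₗ
              hH.comul 1 α (one_mul α)) (1 : C 1)).subtype)) ∧
        -- mutually inverse on these subspaces:
        (∀ x ∈ LinearMap.range (TensorProduct.map (LinearMap.id : V 1 →ₗ[K] V 1)
            (Bsub K ((TensorProduct.map (S.σ 1) LinearMap.id) ∘ₗ
              hH.comul 1 α (one_mul α)) (1 : C 1)).subtype),
          R (Q x) = x) ∧
        (∀ y ∈ IndSub K ((TensorProduct.map (S.σ 1) LinearMap.id) ∘ₗ
              hH.comul 1 α (one_mul α)) (ρ.coact 1 1 (mul_one 1)),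
          Q (R y) = y) ∧
        -- `Q` is a map of right `B_α`-modules:
        (∀ (b : H α),
          b ∈ Bsub K ((TensorProduct.map (S.σ 1) LinearMap.id) ∘ₗ
              hH.comul 1 α (one_mul α)) (1 : C 1) →
          ∀ x : V 1 ⊗[K] H α,
            Q ((TensorProduct.map LinearMap.id (LinearMap.mulRight K b)) x)
              = (TensorProduct.map LinearMap.id (LinearMap.mulRight K b)) (Q x))) := by
  intro α Q R hQ hR
  subst hQ; subst hR
  have einv : (1:π)⁻¹ = 1 := inv_one
  have e2 : (1:π) * 1 = 1 := one_mul 1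
  have e3 : (1:π) * α = α := one_mul α
  -- abbreviations
  set σ1 : H 1 →ₗ[K] C 1 := S.σ 1 with hσ1
  set Δa : H α →ₗ[K] H 1 ⊗[K] H α := hH.comul 1 α (one_mul α) with hΔa
  set ρ1 : V 1 →ₗ[K] V 1 ⊗[K] C 1 := ρ.coact 1 1 (mul_one 1) with hρ1
  set g0 : C 1 →ₗ[K] H 1 := G.g 1 with hg0
  set gi : C 1 →ₗ[K] H 1 := G.ginv 1 1 inv_one.symm with hgi
  set φ : C 1 →ₗ[K] H α := (η α) ∘ₗ g0 with hφ
  set ψ : C 1 →ₗ[K] H α := (η α) ∘ₗ gi with hψ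
  set L : H α →ₗ[K] C 1 ⊗[K] H α := (TensorProduct.map σ1 LinearMap.id) ∘ₗ Δa with hLdef
  set r : H α →ₗ[K] H α :=
    (LinearMap.mul' K (H α)) ∘ₗ (TensorProduct.map ψ LinearMap.id) ∘ₗ L with hr
  set mα : C 1 ⊗[K] H α →ₗ[K] H α :=
    (LinearMap.mul' K (H α)) ∘ₗ (TensorProduct.map φ LinearMap.id) with hmα
  set Δ1 : H 1 →ₗ[K] H 1 ⊗[K] H 1 := hH.comul 1 1 (mul_one 1) with hΔ1
  set ΔC : C 1 →ₗ[K] C 1 ⊗[K] C 1 := hC.comul 1 1 (mul_one 1) with hΔC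
  set L1 : H 1 →ₗ[K] C 1 ⊗[K] H 1 := (TensorProduct.map σ1 LinearMap.id) ∘ₗ Δ1 with hL1def
  set SC : C 1 →ₗ[K] C 1 := hC.antipode 1 1 inv_one with hSC
  set εC : C 1 →ₗ[K] K := hC.counit with hεC
  set εH : H 1 →ₗ[K] K := hH.counit with hεH
  -- basic multiplicativity
  have hσmul : ∀ x y : H 1, σ1 (x * y) = σ1 x * σ1 y := S.σ_mul 1
  have hσone : σ1 (1 : H 1) = 1 := S.σ_one 1
  have hΔa_mul : ∀ x y : H α, Δa (x * y) = Δa x * Δa y :=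
    fun x y => hH.comul_mul 1 α α (one_mul α) x y
  have hΔa_one : Δa 1 = 1 := hH.comul_one 1 α α (one_mul α)
  have hΔ1_mul : ∀ x y : H 1, Δ1 (x * y) = Δ1 x * Δ1 y :=
    fun x y => hH.comul_mul 1 1 1 (mul_one 1) x y
  have hΔ1_one : Δ1 1 = 1 := hH.comul_one 1 1 1 (mul_one 1)
  have hL_pt : ∀ h : H α, L h = TensorProduct.map σ1 LinearMap.id (Δa h) := fun _ => rfl
  have hL1_pt : ∀ x : H 1, L1 x = TensorProduct.map σ1 LinearMap.id (Δ1 x) := fun _ => rfl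
  have hL_mul : ∀ x y : H α, L (x * y) = L x * L y := by
    intro x y
    rw [hL_pt, hL_pt, hL_pt, hΔa_mul]
    exact aux_map_mul σ1 LinearMap.id hσmul (fun _ _ => rfl) _ _
  have hL_one : L (1 : H α) = 1 := by
    rw [hL_pt, hΔa_one, Algebra.TensorProduct.one_def, map_tmul]
    simp [hσone, Algebra.TensorProduct.one_def]
  have hL1_mul : ∀ x y : H 1, L1 (x * y) = L1 x * L1 y := by
    intro x y
    rw [hL1_pt, hL1_pt, hL1_pt, hΔ1_mul]
    exact aux_map_mul σ1 LinearMap.id hσmul (fun _ _ => rfl) _ _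
  have hL1_one : L1 (1 : H 1) = 1 := by
    rw [hL1_pt, hΔ1_one, Algebra.TensorProduct.one_def, map_tmul]
    simp [hσone, Algebra.TensorProduct.one_def]
  -- the cosection statement, applied
  have hLη : ∀ x : H 1, L (η α x) = TensorProduct.map LinearMap.id (η α) (L1 x) := by
    intro x
    have h1 := LinearMap.congr_fun (η_cosec α) x
    simp only [comp_apply] at h1
    rw [hL_pt, hL1_pt]
    rw [show Δa (η α x) = TensorProduct.map LinearMap.id (η α) (Δ1 x) from h1]
    rw [aux_map_map, aux_map_map]
    simp only [LinearMap.comp_id, LinearMap.id_comp]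
  -- the section statement, applied
  have hLg : ∀ c : C 1, L1 (g0 c) = TensorProduct.map LinearMap.id g0 (ΔC c) := by
    intro c
    have h1 := LinearMap.congr_fun (G.g_sec 1) c
    simp only [comp_apply] at h1
    exact h1
  have hσΔ : ∀ x : H 1, ΔC (σ1 x) = TensorProduct.map σ1 σ1 (Δ1 x) := by
    intro x
    have h1 := LinearMap.congr_fun (S.σ_comul 1 1 1 (mul_one 1)) x
    simp only [comp_apply] at h1
    exact h1
  have hσε : ∀ x : H 1, εC (σ1 x) = εH x := by
    intro x
    have h1 := LinearMap.congr_fun S.σ_counit x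
    simp only [comp_apply] at h1
    exact h1
  -- counit laws
  have hcuH : (TensorProduct.lid K (H α)).toLinearMap ∘ₗ
      (TensorProduct.map εH LinearMap.id) ∘ₗ Δa = LinearMap.id := hH.counit_comul α
  have hcuC_left : (TensorProduct.lid K (C 1)).toLinearMap ∘ₗ
      (TensorProduct.map εC LinearMap.id) ∘ₗ ΔC = LinearMap.id := hC.counit_comul 1
  have hcuC_right : (TensorProduct.rid K (C 1)).toLinearMap ∘ₗ
      (TensorProduct.map LinearMap.id εC) ∘ₗ ΔC = LinearMap.id := hC.comul_counit 1
  have hcuV : (TensorProduct.rid K (V 1)).toLinearMap ∘ₗ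
      (TensorProduct.map LinearMap.id εC) ∘ₗ ρ1 = LinearMap.id := ρ.coact_counit 1
  -- transported coassociativity for H at (1,1,α)
  have h11a : (1:π) * 1 * α = α := by rw [e2, e3]
  have h11a' : (1:π) * (1 * α) = α := by rw [e3, e3]
  have hcoH : ∀ h : H α, TensorProduct.map LinearMap.id Δa (Δa h)
      = (TensorProduct.assoc K (H 1) (H 1) (H α)) (TensorProduct.map Δ1 LinearMap.id (Δa h)) := by
    intro x
    have c1 : ∀ x : H α, hH.comul ((1:π)*1) α h11a x
        = TensorProduct.map (lcast K e2.symm) LinearMap.id (Δa x) :=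
      fun x => comul_cast_left K hH.toPiCoalg e2.symm (one_mul α) h11a x
    have c2 : (hH.comul 1 1 rfl) ∘ₗ (lcast K e2.symm : H 1 →ₗ[K] H ((1:π)*1)) = Δ1 :=
      LinearMap.ext fun y => comul_cast_dom K hH.toPiCoalg e2.symm (mul_one 1) rfl y
    have c3 : ∀ x : H α, hH.comul 1 ((1:π)*α) h11a' x
        = TensorProduct.map LinearMap.id (lcast K e3.symm) (Δa x) :=
      fun x => comul_cast_right K hH.toPiCoalg e3.symm (one_mul α) h11a' x
    have c4 : (hH.comul 1 α rfl) ∘ₗ (lcast K e3.symm : H α →ₗ[K] H ((1:π)*α)) = Δa :=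
      LinearMap.ext fun k => comul_cast_dom K hH.toPiCoalg e3.symm (one_mul α) rfl k
    have h0 := LinearMap.congr_fun (hH.coassoc 1 1 α α h11a h11a') x
    simp only [comp_apply, LinearEquiv.coe_coe] at h0
    rw [c1, c3, aux_map_map, aux_map_map, c2, c4, LinearMap.id_comp] at h0
    exact h0.symm
  have hcoHm : (TensorProduct.map LinearMap.id Δa) ∘ₗ Δa
      = (TensorProduct.assoc K (H 1) (H 1) (H α)).toLinearMap ∘ₗ
        (TensorProduct.map Δ1 LinearMap.id) ∘ₗ Δa := by
    apply LinearMap.ext; intro x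
    simp only [comp_apply, LinearEquiv.coe_coe]
    exact hcoH x
  -- transported coassociativity for C at (1,1,1)
  have h111 : (1:π) * 1 * 1 = 1 := by rw [e2, e2]
  have h111' : (1:π) * (1 * 1) = 1 := by rw [e2, e2]
  have hcoC : ∀ c : C 1, TensorProduct.map LinearMap.id ΔC (ΔC c)
      = (TensorProduct.assoc K (C 1) (C 1) (C 1)) (TensorProduct.map ΔC LinearMap.id (ΔC c)) := by
    intro x
    have c1 : ∀ x : C 1, hC.comul ((1:π)*1) 1 h111 x
        = TensorProduct.map (lcast K e2.symm) LinearMap.id (ΔC x) :=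
      fun x => comul_cast_left K hC.toPiCoalg e2.symm (mul_one 1) h111 x
    have c2 : (hC.comul 1 1 rfl) ∘ₗ (lcast K e2.symm : C 1 →ₗ[K] C ((1:π)*1)) = ΔC :=
      LinearMap.ext fun y => comul_cast_dom K hC.toPiCoalg e2.symm (mul_one 1) rfl y
    have c3 : ∀ x : C 1, hC.comul 1 ((1:π)*1) h111' x
        = TensorProduct.map LinearMap.id (lcast K e2.symm) (ΔC x) :=
      fun x => comul_cast_right K hC.toPiCoalg e2.symm (mul_one 1) h111' x
    have h0 := LinearMap.congr_fun (hC.coassoc 1 1 1 1 h111 h111') x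
    simp only [comp_apply, LinearEquiv.coe_coe] at h0
    rw [c1, c3, aux_map_map, aux_map_map, c2, LinearMap.id_comp] at h0
    exact h0.symm
  have hcoCm : (TensorProduct.map LinearMap.id ΔC) ∘ₗ ΔC
      = (TensorProduct.assoc K (C 1) (C 1) (C 1)).toLinearMap ∘ₗ
        (TensorProduct.map ΔC LinearMap.id) ∘ₗ ΔC := by
    apply LinearMap.ext; intro x
    simp only [comp_apply, LinearEquiv.coe_coe]
    exact hcoC x
  -- transported coassociativity for the comodule
  have hcoV : ∀ v : V 1, TensorProduct.map LinearMap.id ΔC (ρ1 v)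
      = (TensorProduct.assoc K (V 1) (C 1) (C 1)) (TensorProduct.map ρ1 LinearMap.id (ρ1 v)) := by
    intro x
    have c1 : ∀ x : V 1, ρ.coact ((1:π)*1) 1 h111 x
        = TensorProduct.map (lcast K e2.symm) LinearMap.id (ρ1 x) :=
      fun x => coact_cast_left K ρ e2.symm (mul_one 1) h111 x
    have c2 : (ρ.coact 1 1 rfl) ∘ₗ (lcast K e2.symm : V 1 →ₗ[K] V ((1:π)*1)) = ρ1 :=
      LinearMap.ext fun y => coact_cast_dom K ρ e2.symm (mul_one 1) rfl y
    have c3 : ∀ x : V 1, ρ.coact 1 ((1:π)*1) h111' x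
        = TensorProduct.map LinearMap.id (lcast K e2.symm) (ρ1 x) :=
      fun x => coact_cast_right K ρ e2.symm (mul_one 1) h111' x
    have c4 : (hC.comul 1 1 rfl) ∘ₗ (lcast K e2.symm : C 1 →ₗ[K] C ((1:π)*1)) = ΔC :=
      LinearMap.ext fun y => comul_cast_dom K hC.toPiCoalg e2.symm (mul_one 1) rfl y
    have h0 := LinearMap.congr_fun (ρ.coassoc 1 1 1 1 h111 h111') x
    simp only [comp_apply, LinearEquiv.coe_coe] at h0
    rw [c1, c3, aux_map_map, aux_map_map, c2, c4, LinearMap.id_comp] at h0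
    exact h0.symm
  -- transported convolution identities for the section
  have hconv_r : ∀ c : C 1, mul' K (H 1) (TensorProduct.map g0 gi (ΔC c))
      = algebraMap K (H 1) (εC c) := by
    intro c
    have h0 := LinearMap.congr_fun (G.conv_right 1) c
    simp only [comp_apply, Algebra.linearMap_apply] at h0
    have d1 : hC.comul 1 (1:π)⁻¹ (mul_inv_cancel 1) c
        = TensorProduct.map LinearMap.id (lcast K einv.symm) (ΔC c) :=
      comul_cast_right K hC.toPiCoalg einv.symm (mul_one 1) (mul_inv_cancel 1) c
    have d2 : (G.ginv 1 (1:π)⁻¹ rfl) ∘ₗ (lcast K einv.symm : C 1 →ₗ[K] C ((1:π)⁻¹)) = gi :=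
      LinearMap.ext fun x => (ginv_cast K G einv rfl inv_one.symm x).symm
    rw [d1, aux_map_map, d2, LinearMap.comp_id] at h0
    exact h0
  have hconv_l : ∀ c : C 1, mul' K (H 1) (TensorProduct.map gi g0 (ΔC c))
      = algebraMap K (H 1) (εC c) := by
    intro c
    have h0 := LinearMap.congr_fun (G.conv_left 1) c
    simp only [comp_apply, Algebra.linearMap_apply] at h0
    have d1 : hC.comul (1:π)⁻¹ 1 (inv_mul_cancel 1) c
        = TensorProduct.map (lcast K einv.symm) LinearMap.id (ΔC c) :=
      comul_cast_left K hC.toPiCoalg einv.symm (mul_one 1) (inv_mul_cancel 1) c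
    have d2 : (G.ginv 1 (1:π)⁻¹ rfl) ∘ₗ (lcast K einv.symm : C 1 →ₗ[K] C ((1:π)⁻¹)) = gi :=
      LinearMap.ext fun x => (ginv_cast K G einv rfl inv_one.symm x).symm
    rw [d1, aux_map_map, d2, LinearMap.comp_id] at h0
    exact h0
  -- the antipode identity, transported
  have hant : ∀ c : C 1, mul' K (C 1) (TensorProduct.map SC LinearMap.id (ΔC c))
      = algebraMap K (C 1) (εC c) := by
    intro c
    have h0 := LinearMap.congr_fun (hC.antipode_left 1) c
    simp only [comp_apply, Algebra.linearMap_apply] at h0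
    have d1 : hC.comul (1:π)⁻¹ 1 (inv_mul_cancel 1) c
        = TensorProduct.map (lcast K einv.symm) LinearMap.id (ΔC c) :=
      comul_cast_left K hC.toPiCoalg einv.symm (mul_one 1) (inv_mul_cancel 1) c
    have d2 : (hC.antipode (1:π)⁻¹ 1 (inv_inv 1)) ∘ₗ
        (lcast K einv.symm : C 1 →ₗ[K] C ((1:π)⁻¹)) = SC := by
      apply LinearMap.ext; intro x
      simp only [comp_apply]
      rw [antipode_cast K hC einv (inv_inv 1) inv_one, lcast_cancel]
    rw [d1, aux_map_map, d2, LinearMap.comp_id] at h0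
    exact h0
  -- push conv identities through η
  have hη_alg : ∀ k : K, η α (algebraMap K (H 1) k) = algebraMap K (H α) k := by
    intro k
    rw [Algebra.algebraMap_eq_smul_one, Algebra.algebraMap_eq_smul_one, map_smul, η_one]
  have hφψ : ∀ c : C 1, mul' K (H α) (TensorProduct.map φ ψ (ΔC c))
      = algebraMap K (H α) (εC c) := by
    intro c
    have h0 := congrArg (η α) (hconv_r c)
    rw [aux_hom_mul' (η α) (η_mul α), aux_map_map, hη_alg] at h0
    exact h0
  have hψφ : ∀ c : C 1, mul' K (H α) (TensorProduct.map ψ φ (ΔC c))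
      = algebraMap K (H α) (εC c) := by
    intro c
    have h0 := congrArg (η α) (hconv_l c)
    rw [aux_hom_mul' (η α) (η_mul α), aux_map_map, hη_alg] at h0
    exact h0
  -- the key formula for L (φ c)
  have hLφ : ∀ c : C 1, L (φ c) = TensorProduct.map LinearMap.id φ (ΔC c) := by
    intro c
    have h1 : L (φ c) = TensorProduct.map LinearMap.id (η α) (L1 (g0 c)) := hLη (g0 c)
    rw [h1, hLg c, aux_map_map, LinearMap.id_comp]
  -- identify L1 ∘ gi via convolution uniqueness
  set f₁ : C 1 →ₗ[K] C 1 ⊗[K] H 1 := (TensorProduct.mk K (C 1) (H 1) 1) ∘ₗ gi with hf₁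
  set f₂ : C 1 →ₗ[K] C 1 ⊗[K] H 1 :=
    ((TensorProduct.mk K (C 1) (H 1)).flip 1) ∘ₗ SC with hf₂
  set f₃ : C 1 →ₗ[K] C 1 ⊗[K] H 1 := ((TensorProduct.mk K (C 1) (H 1)).flip 1) with hf₃
  set f₄ : C 1 →ₗ[K] C 1 ⊗[K] H 1 := (TensorProduct.mk K (C 1) (H 1) 1) ∘ₗ g0 with hf₄
  set uC : C 1 →ₗ[K] C 1 ⊗[K] H 1 := Algebra.linearMap K (C 1 ⊗[K] H 1) ∘ₗ εC with huC
  have hFG : convm ΔC (L1 ∘ₗ g0) (L1 ∘ₗ gi) = uC := by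
    apply LinearMap.ext; intro c
    rw [convm_apply]
    rw [show TensorProduct.map (L1 ∘ₗ g0) (L1 ∘ₗ gi) (ΔC c)
        = TensorProduct.map L1 L1 (TensorProduct.map g0 gi (ΔC c)) from
      (aux_map_map L1 L1 g0 gi _).symm]
    rw [← aux_hom_mul' L1 hL1_mul, hconv_r c, huC]
    simp only [comp_apply, Algebra.linearMap_apply]
    rw [Algebra.algebraMap_eq_smul_one, Algebra.algebraMap_eq_smul_one, map_smul, hL1_one]
  have hf23 : convm ΔC f₂ f₃ = uC := by
    apply LinearMap.ext; intro c
    rw [convm_apply]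
    have key : (mul' K (C 1 ⊗[K] H 1)) ∘ₗ TensorProduct.map f₂ f₃
        = ((TensorProduct.mk K (C 1) (H 1)).flip 1) ∘ₗ (mul' K (C 1)) ∘ₗ
            TensorProduct.map SC LinearMap.id := by
      apply TensorProduct.ext'
      intro a b
      simp [hf₁, hf₂, hf₃, hf₄, hψ, hφ, flip_apply,
        TensorProduct.mk_apply, Algebra.TensorProduct.tmul_mul_tmul]
    have hkc := congrArg (fun (F : C 1 ⊗[K] C 1 →ₗ[K] C 1 ⊗[K] H 1) => F (ΔC c)) key
    simp only [comp_apply] at hkc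
    rw [hkc, hant c, huC]
    simp only [comp_apply, Algebra.linearMap_apply, flip_apply, TensorProduct.mk_apply,
      Algebra.TensorProduct.algebraMap_apply]
  have hf14 : convm ΔC f₁ f₄ = uC := by
    apply LinearMap.ext; intro c
    rw [convm_apply]
    have key : (mul' K (C 1 ⊗[K] H 1)) ∘ₗ TensorProduct.map f₁ f₄
        = (TensorProduct.mk K (C 1) (H 1) 1) ∘ₗ (mul' K (H 1)) ∘ₗ
            TensorProduct.map gi g0 := by
      apply TensorProduct.ext'
      intro a b
      simp [hf₁, hf₂, hf₃, hf₄, hψ, hφ, flip_apply,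
        TensorProduct.mk_apply, Algebra.TensorProduct.tmul_mul_tmul]
    have hkc := congrArg (fun (F : C 1 ⊗[K] C 1 →ₗ[K] C 1 ⊗[K] H 1) => F (ΔC c)) key
    simp only [comp_apply] at hkc
    rw [hkc, hconv_l c, huC]
    simp only [comp_apply, Algebra.linearMap_apply, TensorProduct.mk_apply,
      Algebra.TensorProduct.algebraMap_apply]
    rw [Algebra.algebraMap_eq_smul_one, Algebra.algebraMap_eq_smul_one, tmul_smul, smul_tmul']
  have hF34 : L1 ∘ₗ g0 = convm ΔC f₃ f₄ := by
    apply LinearMap.ext; intro c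
    rw [comp_apply, convm_apply, hLg c]
    have key : (mul' K (C 1 ⊗[K] H 1)) ∘ₗ TensorProduct.map f₃ f₄
        = TensorProduct.map LinearMap.id g0 := by
      apply TensorProduct.ext'
      intro a b
      simp [hf₁, hf₂, hf₃, hf₄, hψ, hφ, flip_apply,
        TensorProduct.mk_apply, Algebra.TensorProduct.tmul_mul_tmul]
    have hkc := congrArg (fun (F : C 1 ⊗[K] C 1 →ₗ[K] C 1 ⊗[K] H 1) => F (ΔC c)) key
    simp only [comp_apply] at hkc
    rw [hkc]
  have hGrep : L1 ∘ₗ gi = convm ΔC f₁ f₂ := by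
    have h1 : convm ΔC (convm ΔC f₂ f₃) f₄ = f₄ := by
      rw [hf23]
      exact convm_one ΔC εC hcuC_left f₄
    have h2 : convm ΔC f₂ (convm ΔC f₃ f₄) = f₄ := by
      rw [← convm_assoc ΔC ΔC hcoCm f₂ f₃ f₄]; exact h1
    have h3 : convm ΔC (convm ΔC f₁ f₂) (L1 ∘ₗ g0) = uC := by
      rw [hF34, convm_assoc ΔC ΔC hcoCm f₁ f₂ _, h2]
      exact hf14
    calc L1 ∘ₗ gi = convm ΔC uC (L1 ∘ₗ gi) :=
          (convm_one ΔC εC hcuC_left _).symm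
      _ = convm ΔC (convm ΔC (convm ΔC f₁ f₂) (L1 ∘ₗ g0)) (L1 ∘ₗ gi) := by rw [h3]
      _ = convm ΔC (convm ΔC f₁ f₂) (convm ΔC (L1 ∘ₗ g0) (L1 ∘ₗ gi)) :=
          convm_assoc ΔC ΔC hcoCm _ _ _
      _ = convm ΔC (convm ΔC f₁ f₂) uC := by rw [hFG]
      _ = convm ΔC f₁ f₂ := convm_one_right ΔC εC hcuC_right _
  -- pointwise form of r
  have hr_pt : ∀ h : H α, r h
      = mul' K (H α) (TensorProduct.map (ψ ∘ₗ σ1) LinearMap.id (Δa h)) := by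
    intro h
    rw [hr]
    simp only [comp_apply]
    rw [show L h = TensorProduct.map σ1 LinearMap.id (Δa h) from rfl,
      aux_map_map, LinearMap.id_comp]
  -- the mixed convolution picture for L ∘ r
  set w₁ : H 1 →ₗ[K] C 1 ⊗[K] H α := (TensorProduct.mk K (C 1) (H α) 1) ∘ₗ ψ ∘ₗ σ1 with hw₁
  set w₂ : H 1 →ₗ[K] C 1 ⊗[K] H α :=
    ((TensorProduct.mk K (C 1) (H α)).flip 1) ∘ₗ SC ∘ₗ σ1 with hw₂
  set w₃ : H 1 →ₗ[K] C 1 ⊗[K] H α := ((TensorProduct.mk K (C 1) (H α)).flip 1) ∘ₗ σ1 with hw₃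
  set w₄ : H α →ₗ[K] C 1 ⊗[K] H α := (TensorProduct.mk K (C 1) (H α) 1) with hw₄
  have hLr : L ∘ₗ r = convm Δa (L ∘ₗ ψ ∘ₗ σ1) L := by
    apply LinearMap.ext; intro h
    rw [comp_apply, convm_apply, hr_pt h]
    rw [aux_hom_mul' L hL_mul, aux_map_map, LinearMap.comp_id]
  have hb2 : L ∘ₗ ψ ∘ₗ σ1 = convm Δ1 w₁ w₂ := by
    apply LinearMap.ext; intro x
    simp only [comp_apply, convm_apply]
    have e1 : L (ψ (σ1 x)) = TensorProduct.map LinearMap.id (η α) (L1 (gi (σ1 x))) :=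
      hLη (gi (σ1 x))
    have e2 : L1 (gi (σ1 x))
        = mul' K (C 1 ⊗[K] H 1) (TensorProduct.map f₁ f₂ (ΔC (σ1 x))) :=
      LinearMap.congr_fun hGrep (σ1 x)
    rw [e1, e2, hσΔ x, aux_map_map]
    have key : (TensorProduct.map LinearMap.id (η α)) ∘ₗ (mul' K (C 1 ⊗[K] H 1)) ∘ₗ
        TensorProduct.map (f₁ ∘ₗ σ1) (f₂ ∘ₗ σ1)
        = (mul' K (C 1 ⊗[K] H α)) ∘ₗ TensorProduct.map w₁ w₂ := by
      apply TensorProduct.ext'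
      intro a b
      simp [hf₁, hf₂, hf₃, hf₄, hw₁, hw₂, hw₃, hw₄, hψ, hφ, flip_apply,
        TensorProduct.mk_apply, Algebra.TensorProduct.tmul_mul_tmul]
    have hkc := congrArg
      (fun (F : H 1 ⊗[K] H 1 →ₗ[K] C 1 ⊗[K] H α) => F (Δ1 x)) key
    simp only [comp_apply] at hkc
    exact hkc
  have hc2 : L = convm Δa w₃ w₄ := by
    apply LinearMap.ext; intro h
    rw [convm_apply]
    have key : (mul' K (C 1 ⊗[K] H α)) ∘ₗ TensorProduct.map w₃ w₄
        = TensorProduct.map σ1 LinearMap.id := by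
      apply TensorProduct.ext'
      intro a b
      simp [hf₁, hf₂, hf₃, hf₄, hw₁, hw₂, hw₃, hw₄, hψ, hφ, flip_apply,
        TensorProduct.mk_apply, Algebra.TensorProduct.tmul_mul_tmul]
    have hkc := congrArg
      (fun (F : H 1 ⊗[K] H α →ₗ[K] C 1 ⊗[K] H α) => F (Δa h)) key
    simp only [comp_apply] at hkc
    rw [hkc]
    rfl
  have hd2 : convm Δ1 w₂ w₃ = Algebra.linearMap K (C 1 ⊗[K] H α) ∘ₗ εH := by
    apply LinearMap.ext; intro x
    rw [convm_apply]
    have key : (mul' K (C 1 ⊗[K] H α)) ∘ₗ TensorProduct.map w₂ w₃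
        = ((TensorProduct.mk K (C 1) (H α)).flip 1) ∘ₗ (mul' K (C 1)) ∘ₗ
            (TensorProduct.map SC LinearMap.id) ∘ₗ TensorProduct.map σ1 σ1 := by
      apply TensorProduct.ext'
      intro a b
      simp [hf₁, hf₂, hf₃, hf₄, hw₁, hw₂, hw₃, hw₄, hψ, hφ, flip_apply,
        TensorProduct.mk_apply, Algebra.TensorProduct.tmul_mul_tmul]
    have hkc := congrArg
      (fun (F : H 1 ⊗[K] H 1 →ₗ[K] C 1 ⊗[K] H α) => F (Δ1 x)) key
    simp only [comp_apply] at hkc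
    rw [hkc, ← hσΔ x, hant (σ1 x), hσε x]
    simp only [comp_apply, Algebra.linearMap_apply, flip_apply, TensorProduct.mk_apply,
      Algebra.TensorProduct.algebraMap_apply]
  have hf2 : convm Δa w₁ w₄ = (TensorProduct.mk K (C 1) (H α) 1) ∘ₗ r := by
    apply LinearMap.ext; intro h
    rw [convm_apply, comp_apply, hr_pt h]
    have key : (mul' K (C 1 ⊗[K] H α)) ∘ₗ TensorProduct.map w₁ w₄
        = (TensorProduct.mk K (C 1) (H α) 1) ∘ₗ (mul' K (H α)) ∘ₗ
            TensorProduct.map (ψ ∘ₗ σ1) LinearMap.id := by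
      apply TensorProduct.ext'
      intro a b
      simp [hf₁, hf₂, hf₃, hf₄, hw₁, hw₂, hw₃, hw₄, hψ, hφ, flip_apply,
        TensorProduct.mk_apply, Algebra.TensorProduct.tmul_mul_tmul]
    have hkc := congrArg
      (fun (F : H 1 ⊗[K] H α →ₗ[K] C 1 ⊗[K] H α) => F (Δa h)) key
    simp only [comp_apply] at hkc
    rw [hkc]
  have hkeyB : L ∘ₗ r = (TensorProduct.mk K (C 1) (H α) 1) ∘ₗ r := by
    rw [hLr, hb2, convm_assoc Δ1 Δa hcoHm w₁ w₂ L]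
    rw [show convm Δa w₂ L = w₄ by
      rw [hc2, ← convm_assoc Δ1 Δa hcoHm w₂ w₃ w₄, hd2]
      exact convm_one Δa εH hcuH w₄]
    exact hf2
  -- the composite used for Q ∘ R = id
  have hQR : mα ∘ₗ TensorProduct.map LinearMap.id r ∘ₗ L = LinearMap.id := by
    have h1 : mα ∘ₗ TensorProduct.map LinearMap.id r ∘ₗ L = convm Δa (φ ∘ₗ σ1) r := by
      apply LinearMap.ext; intro h
      simp only [comp_apply, convm_apply]
      rw [show L h = TensorProduct.map σ1 LinearMap.id (Δa h) from rfl, aux_map_map]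
      rw [show mα (TensorProduct.map (LinearMap.id ∘ₗ σ1) (r ∘ₗ LinearMap.id) (Δa h))
          = mul' K (H α) (TensorProduct.map φ LinearMap.id
              (TensorProduct.map (LinearMap.id ∘ₗ σ1) (r ∘ₗ LinearMap.id) (Δa h))) from rfl]
      rw [aux_map_map]
      simp only [LinearMap.id_comp, LinearMap.comp_id]
    have h2 : r = convm Δa (ψ ∘ₗ σ1) LinearMap.id := by
      apply LinearMap.ext; intro h
      rw [convm_apply, hr_pt h]
    have h3 : convm Δ1 (φ ∘ₗ σ1) (ψ ∘ₗ σ1) = Algebra.linearMap K (H α) ∘ₗ εH := by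
      apply LinearMap.ext; intro x
      rw [convm_apply]
      rw [show TensorProduct.map (φ ∘ₗ σ1) (ψ ∘ₗ σ1) (Δ1 x)
          = TensorProduct.map φ ψ (TensorProduct.map σ1 σ1 (Δ1 x)) from
        (aux_map_map φ ψ σ1 σ1 _).symm]
      rw [← hσΔ x, hφψ (σ1 x), hσε x]
      simp only [comp_apply, Algebra.linearMap_apply]
    rw [h1, h2, ← convm_assoc Δ1 Δa hcoHm (φ ∘ₗ σ1) (ψ ∘ₗ σ1) LinearMap.id, h3]
    exact convm_one Δa εH hcuH LinearMap.id
  -- pointwise description of the map Q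
  have hQval : ∀ (v : V 1) (h : H α),
      TensorProduct.map LinearMap.id mα
        ((TensorProduct.assoc K (V 1) (C 1) (H α)) (ρ1 v ⊗ₜ[K] h))
      = TensorProduct.map LinearMap.id ((mulRight K h) ∘ₗ φ) (ρ1 v) := by
    intro v h
    generalize ρ1 v = s
    induction s using TensorProduct.induction_on with
    | zero => simp
    | tmul v' c =>
      simp only [assoc_tmul, map_tmul, LinearMap.id_coe, id_eq, comp_apply,
        mulRight_apply]
      rw [show mα (c ⊗ₜ[K] h)
          = mul' K (H α) (TensorProduct.map φ LinearMap.id (c ⊗ₜ[K] h)) from rfl]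
      simp only [map_tmul, mul'_apply, LinearMap.id_coe, id_eq]
    | add u w hu hw => simp only [add_tmul, map_add, hu, hw]
  have hBmem : ∀ b : H α, b ∈ Bsub K L (1 : C 1) → L b = (1 : C 1) ⊗ₜ[K] b := by
    intro b hbm
    have h0 : (L - (TensorProduct.mk K (C 1) (H α)) 1) b = 0 := hbm
    rw [LinearMap.sub_apply, sub_eq_zero] at h0
    exact h0
  have hLmb : ∀ b : H α, L b = (1 : C 1) ⊗ₜ[K] b →
      L ∘ₗ ((mulRight K b) ∘ₗ φ)
        = TensorProduct.map LinearMap.id ((mulRight K b) ∘ₗ φ) ∘ₗ ΔC := by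
    intro b hb
    apply LinearMap.ext; intro c
    simp only [comp_apply, mulRight_apply]
    rw [hL_mul, hb, hLφ c, aux_mul_one_tmul, aux_map_map, LinearMap.id_comp]
  have hg1point : ∀ (v : V 1) (b : H α), L b = (1 : C 1) ⊗ₜ[K] b →
      TensorProduct.map LinearMap.id L
          (TensorProduct.map LinearMap.id ((mulRight K b) ∘ₗ φ) (ρ1 v))
        = (TensorProduct.assoc K (V 1) (C 1) (H α))
            (TensorProduct.map ρ1 LinearMap.id
              (TensorProduct.map LinearMap.id ((mulRight K b) ∘ₗ φ) (ρ1 v))) := by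
    intro v b hb
    calc TensorProduct.map LinearMap.id L
          (TensorProduct.map LinearMap.id ((mulRight K b) ∘ₗ φ) (ρ1 v))
        = TensorProduct.map LinearMap.id (L ∘ₗ ((mulRight K b) ∘ₗ φ)) (ρ1 v) := by
          rw [aux_map_map, LinearMap.id_comp]
      _ = TensorProduct.map LinearMap.id
            (TensorProduct.map LinearMap.id ((mulRight K b) ∘ₗ φ) ∘ₗ ΔC) (ρ1 v) := by
          rw [hLmb b hb]
      _ = TensorProduct.map LinearMap.id
            (TensorProduct.map LinearMap.id ((mulRight K b) ∘ₗ φ))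
            (TensorProduct.map LinearMap.id ΔC (ρ1 v)) := by
          rw [aux_map_map, LinearMap.id_comp]
      _ = TensorProduct.map LinearMap.id
            (TensorProduct.map LinearMap.id ((mulRight K b) ∘ₗ φ))
            ((TensorProduct.assoc K (V 1) (C 1) (C 1))
              (TensorProduct.map ρ1 LinearMap.id (ρ1 v))) := by rw [hcoV v]
      _ = (TensorProduct.assoc K (V 1) (C 1) (H α))
            (TensorProduct.map LinearMap.id ((mulRight K b) ∘ₗ φ)
              (TensorProduct.map ρ1 LinearMap.id (ρ1 v))) := aux_assoc_nat _ _
      _ = (TensorProduct.assoc K (V 1) (C 1) (H α))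
            (TensorProduct.map ρ1 LinearMap.id
              (TensorProduct.map LinearMap.id ((mulRight K b) ∘ₗ φ) (ρ1 v))) := by
          rw [aux_map_map, aux_map_map]
          simp only [LinearMap.id_comp, LinearMap.comp_id]
  refine ⟨?_, ?_, ?_, ?_, ?_⟩
  · -- (1) Q maps V ⊗ B into Ind(ρ)
    intro x hx
    obtain ⟨z, rfl⟩ := hx
    refine LinearMap.mem_ker.mpr ?_
    have main : ((TensorProduct.map LinearMap.id L) -
          (TensorProduct.assoc K (V 1) (C 1) (H α)).toLinearMap ∘ₗ
            TensorProduct.map ρ1 LinearMap.id) ∘ₗ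
        (TensorProduct.map LinearMap.id mα ∘ₗ
          (TensorProduct.assoc K (V 1) (C 1) (H α)).toLinearMap ∘ₗ
          TensorProduct.map ρ1 LinearMap.id) ∘ₗ
        TensorProduct.map LinearMap.id (Bsub K L (1 : C 1)).subtype = 0 := by
      apply TensorProduct.ext'
      intro v b
      simp only [comp_apply, map_tmul, LinearMap.id_coe, id_eq, Submodule.coe_subtype,
        LinearMap.sub_apply, LinearMap.zero_apply, LinearEquiv.coe_coe]
      rw [hQval v (b : H α), sub_eq_zero]
      exact hg1point v (b : H α) (hBmem (b : H α) b.2)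
    have hz := LinearMap.congr_fun main z
    simpa only [comp_apply, LinearMap.zero_apply, LinearEquiv.coe_coe] using hz
  · -- (2) R maps Ind(ρ) into V ⊗ B
    intro y _
    have hmem : ∀ h : H α, r h ∈ Bsub K L (1 : C 1) := by
      intro h
      refine LinearMap.mem_ker.mpr ?_
      rw [LinearMap.sub_apply, sub_eq_zero]
      exact LinearMap.congr_fun hkeyB h
    refine ⟨TensorProduct.map LinearMap.id
      (LinearMap.codRestrict (Bsub K L (1 : C 1)) r hmem) y, ?_⟩
    rw [aux_map_map, LinearMap.subtype_comp_codRestrict, LinearMap.id_comp]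
  · -- (3) R ∘ Q = id on V ⊗ B
    intro x hx
    obtain ⟨z, rfl⟩ := hx
    have hrMb : ∀ b : H α, L b = (1 : C 1) ⊗ₜ[K] b →
        r ∘ₗ ((mulRight K b) ∘ₗ φ) = LinearMap.smulRight εC b := by
      intro b hb
      apply LinearMap.ext; intro c
      simp only [comp_apply, mulRight_apply, LinearMap.smulRight_apply]
      rw [show r (φ c * b)
          = mul' K (H α) (TensorProduct.map ψ LinearMap.id (L (φ c * b))) from rfl]
      rw [hL_mul, hb, hLφ c, aux_mul_one_tmul, aux_map_map, aux_map_map]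
      simp only [LinearMap.id_comp, LinearMap.comp_id]
      rw [aux_mul'_map_right ψ φ b, hψφ c, ← Algebra.smul_def]
    have hcuV_pt : ∀ v : V 1, (TensorProduct.rid K (V 1))
        (TensorProduct.map LinearMap.id εC (ρ1 v)) = v := by
      intro v
      have h0 := LinearMap.congr_fun hcuV v
      simpa only [comp_apply, LinearEquiv.coe_coe, LinearMap.id_coe, id_eq] using h0
    have main3 : (TensorProduct.map LinearMap.id r) ∘ₗ
        (TensorProduct.map LinearMap.id mα ∘ₗ
          (TensorProduct.assoc K (V 1) (C 1) (H α)).toLinearMap ∘ₗ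
          TensorProduct.map ρ1 LinearMap.id) ∘ₗ
        TensorProduct.map LinearMap.id (Bsub K L (1 : C 1)).subtype
        = TensorProduct.map LinearMap.id (Bsub K L (1 : C 1)).subtype := by
      apply TensorProduct.ext'
      intro v b
      simp only [comp_apply, map_tmul, LinearMap.id_coe, id_eq,
        Submodule.coe_subtype, LinearEquiv.coe_coe]
      rw [hQval v (b : H α), aux_map_map, LinearMap.id_comp,
        hrMb (b : H α) (hBmem (b : H α) b.2), aux_map_smulRight, hcuV_pt]
    have hz := LinearMap.congr_fun main3 z
    simpa only [comp_apply] using hz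
  · -- (4) Q ∘ R = id on Ind(ρ)
    intro y hy
    have hQR2 : (mα ∘ₗ TensorProduct.map LinearMap.id r) ∘ₗ L = LinearMap.id :=
      LinearMap.ext fun x => LinearMap.congr_fun hQR x
    have hy0 : TensorProduct.map LinearMap.id L y
        = ((TensorProduct.assoc K (V 1) (C 1) (H α)).toLinearMap ∘ₗ
            TensorProduct.map ρ1 LinearMap.id) y := by
      have h0 := LinearMap.mem_ker.mp hy
      rw [LinearMap.sub_apply, sub_eq_zero] at h0
      exact h0
    simp only [comp_apply, LinearEquiv.coe_coe] at hy0 ⊢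
    rw [show TensorProduct.map ρ1 LinearMap.id (TensorProduct.map LinearMap.id r y)
        = TensorProduct.map LinearMap.id r (TensorProduct.map ρ1 LinearMap.id y) by
      rw [aux_map_map, aux_map_map]
      simp only [LinearMap.id_comp, LinearMap.comp_id]]
    rw [show (TensorProduct.assoc K (V 1) (C 1) (H α))
        (TensorProduct.map LinearMap.id r (TensorProduct.map ρ1 LinearMap.id y))
        = TensorProduct.map LinearMap.id (TensorProduct.map LinearMap.id r)
            ((TensorProduct.assoc K (V 1) (C 1) (H α))
              (TensorProduct.map ρ1 LinearMap.id y)) from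
      (aux_assoc_nat r (TensorProduct.map ρ1 LinearMap.id y)).symm]
    rw [← hy0, aux_map_map, aux_map_map, hQR2]
    simp only [LinearMap.id_comp, LinearMap.comp_id, TensorProduct.map_id]
    rfl
  · -- (5) Q is a map of right B-modules
    intro b _ x
    have main5 : (TensorProduct.map LinearMap.id mα ∘ₗ
          (TensorProduct.assoc K (V 1) (C 1) (H α)).toLinearMap ∘ₗ
          TensorProduct.map ρ1 LinearMap.id) ∘ₗ
        TensorProduct.map LinearMap.id (mulRight K b)
        = TensorProduct.map LinearMap.id (mulRight K b) ∘ₗ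
          (TensorProduct.map LinearMap.id mα ∘ₗ
            (TensorProduct.assoc K (V 1) (C 1) (H α)).toLinearMap ∘ₗ
            TensorProduct.map ρ1 LinearMap.id) := by
      apply TensorProduct.ext'
      intro v h
      simp only [comp_apply, map_tmul, LinearMap.id_coe, id_eq, mulRight_apply,
        LinearEquiv.coe_coe]
      rw [hQval v (h * b), hQval v h, aux_map_map, LinearMap.id_comp]
      have harg : (mulRight K (h * b)) ∘ₗ φ
          = (mulRight K b) ∘ₗ ((mulRight K h) ∘ₗ φ) := by
        apply LinearMap.ext; intro c
        simp only [comp_apply, mulRight_apply]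
        rw [mul_assoc]
      rw [harg]
    have hz := LinearMap.congr_fun main5 x
    simpa only [comp_apply] using hz
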